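/- arXiv:1707.08904 — 2 statements merged into one kernel-verified Lean document; each statement's English description precedes it below -/
import Mathlib

section
/- The range of the function $x \mapsto \psi(2x) - \psi(x)$ on $(0, \infty)$ is the open interval $(\ln 2, \infty)$; in particular, $\psi(2x) - \psi(x) > \ln 2$ for every $x > 0$, and for every $M > \ln 2$ there exists a unique $x > 0$ with $\psi(2x) - \psi(x) = M$. -/
/-!
With `D x = ψ(x + 1/2) - ψ(x)`, Legendre's duplication formula gives
`ψ(2x) - ψ(x) = log 2 + D x / 2`. From `ψ(x + 1) = ψ(x) + 1/x`, `D x + D (x + 1/2) = 1/x` and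
`D x = f x + D (x + 1)` with `f t = 1/t - 1/(t + 1/2)` strictly decreasing. Convexity of `log Γ`
makes `D ≥ 0`, hence `D x ≤ 1/x`; iterating the recursion `n` times and letting `n → ∞` shows
that `D` is antitone, and one more step makes it strictly antitone. Then `1/(2x) ≤ D x ≤ 1/x`,
and since `ψ(2x) - ψ(x)` is the derivative of `log Γ(2x)/2 - log Γ(x)`, Darboux's theorem
provides every intermediate value without any continuity of `ψ`.
-/

/-- The digamma function `ψ = Γ'/Γ`, as the derivative of `log ∘ Γ` on `(0,∞)`. -/
noncomputable def digamma (x : ℝ) : ℝ := deriv (fun y => Real.log (Real.Gamma y)) x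

open Real Set Filter Topology

lemma hasDerivAt_log_Gamma {x : ℝ} (hx : 0 < x) :
    HasDerivAt (fun y => log (Gamma y)) (digamma x) x :=
  ((differentiableAt_Gamma fun m => ((neg_nonpos.2 m.cast_nonneg).trans_lt hx).ne').log
    (Gamma_pos_of_pos hx).ne').hasDerivAt

lemma hasDerivAt_log_Gamma_two_mul {x : ℝ} (hx : 0 < x) :
    HasDerivAt (fun y => log (Gamma (2 * y))) (digamma (2 * x) * 2) x :=
  (hasDerivAt_log_Gamma (by positivity)).comp x
    ((hasDerivAt_id x).const_mul 2 |>.congr_deriv (mul_one 2))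

lemma digamma_add_one {x : ℝ} (hx : 0 < x) : digamma (x + 1) = digamma x + x⁻¹ := by
  have hshift := (hasDerivAt_log_Gamma (by positivity : 0 < x + 1)).comp_add_const x 1
  have hsum := (hasDerivAt_log_Gamma hx).add (hasDerivAt_log hx.ne')
  have heq : (fun y => log (Gamma (y + 1))) =ᶠ[𝓝 x] fun y => log (Gamma y) + log y := by
    filter_upwards [eventually_gt_nhds hx] with y hy
    rw [Gamma_add_one hy.ne', log_mul hy.ne' (Gamma_pos_of_pos hy).ne', add_comm]
  exact (hshift.congr_of_eventuallyEq heq.symm).unique hsum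

lemma monotoneOn_digamma : MonotoneOn digamma (Ioi 0) :=
  convexOn_log_Gamma.monotoneOn_deriv fun _ hx => (hasDerivAt_log_Gamma hx).differentiableAt

lemma digamma_add_digamma_add_half {x : ℝ} (hx : 0 < x) :
    digamma x + digamma (x + 1 / 2) = 2 * digamma (2 * x) - 2 * log 2 := by
  have hsum := (hasDerivAt_log_Gamma hx).add
    ((hasDerivAt_log_Gamma (by positivity : 0 < x + 1 / 2)).comp_add_const x (1 / 2))
  have hdup : HasDerivAt (fun y => log (Gamma (2 * y)) + (1 - 2 * y) * log 2 + log √π)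
      (2 * digamma (2 * x) - 2 * log 2) x := by
    have hlin := ((hasDerivAt_id x).const_mul 2).const_sub 1 |>.mul_const (log 2)
    exact ((hasDerivAt_log_Gamma_two_mul hx).add hlin).add_const _ |>.congr_deriv (by simp; ring)
  have heq : (fun y => log (Gamma y) + log (Gamma (y + 1 / 2)))
      =ᶠ[𝓝 x] fun y => log (Gamma (2 * y)) + (1 - 2 * y) * log 2 + log √π := by
    filter_upwards [eventually_gt_nhds hx] with y hy
    have hlog := congrArg log (Gamma_mul_Gamma_add_half y)
    rwa [log_mul (Gamma_pos_of_pos hy).ne' (Gamma_pos_of_pos (by positivity)).ne',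
      log_mul (by positivity) (sqrt_pos.2 pi_pos).ne',
      log_mul (Gamma_pos_of_pos (by positivity)).ne' (by positivity),
      log_rpow two_pos] at hlog
  exact (hsum.congr_of_eventuallyEq heq.symm).unique hdup

lemma hasDerivAt_half_log_Gamma_two_mul_sub_log_Gamma {x : ℝ} (hx : 0 < x) :
    HasDerivAt (fun y => log (Gamma (2 * y)) / 2 - log (Gamma y))
      (digamma (2 * x) - digamma x) x :=
  ((hasDerivAt_log_Gamma_two_mul hx).div_const 2).sub (hasDerivAt_log_Gamma hx)
    |>.congr_deriv (by ring)

noncomputable def digammaHalfShift (x : ℝ) : ℝ := digamma (x + 1 / 2) - digamma x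

local notation "D" => digammaHalfShift

lemma digamma_two_mul_sub_digamma {x : ℝ} (hx : 0 < x) :
    digamma (2 * x) - digamma x = log 2 + D x / 2 := by
  have := digamma_add_digamma_add_half hx
  rw [digammaHalfShift]
  linarith

lemma digammaHalfShift_nonneg {x : ℝ} (hx : 0 < x) : 0 ≤ D x :=
  sub_nonneg.2 <| monotoneOn_digamma hx (mem_Ioi.2 (by positivity)) (by linarith)

lemma digammaHalfShift_add_digammaHalfShift_add_half {x : ℝ} (hx : 0 < x) :
    D x + D (x + 1 / 2) = x⁻¹ := by
  rw [digammaHalfShift, digammaHalfShift, add_assoc, add_halves, digamma_add_one hx]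
  ring

lemma digammaHalfShift_le_inv {x : ℝ} (hx : 0 < x) : D x ≤ x⁻¹ := by
  have := digammaHalfShift_nonneg (by positivity : 0 < x + 1 / 2)
  linarith [digammaHalfShift_add_digammaHalfShift_add_half hx]

lemma digammaHalfShift_eq_add_digammaHalfShift_add_one {x : ℝ} (hx : 0 < x) :
    D x = x⁻¹ - (x + 1 / 2)⁻¹ + D (x + 1) := by
  have h := digamma_add_one (by positivity : 0 < x + 1 / 2)
  rw [add_right_comm] at h
  rw [digammaHalfShift, digammaHalfShift, h, digamma_add_one hx]
  ring

lemma strictAntiOn_inv_sub_inv_add_half :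
    StrictAntiOn (fun t : ℝ => t⁻¹ - (t + 1 / 2)⁻¹) (Ioi 0) := by
  intro a (ha : 0 < a) b (hb : 0 < b) hab
  have hform : ∀ t : ℝ, 0 < t → t⁻¹ - (t + 1 / 2)⁻¹ = (t * (2 * t + 1))⁻¹ := fun t ht => by
    field_simp
    ring
  simp only [hform a ha, hform b hb]
  gcongr

lemma digammaHalfShift_sub_add_nat_le {a b : ℝ} (ha : 0 < a) (hab : a ≤ b) (n : ℕ) :
    D (a + n) - D (b + n) ≤ D a - D b := by
  induction n with
  | zero => simp
  | succ n ih =>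
    have han : 0 < a + n := by positivity
    have hf := strictAntiOn_inv_sub_inv_add_half.antitoneOn han (han.trans_le (by linarith))
      (by linarith : a + n ≤ b + n)
    rw [digammaHalfShift_eq_add_digammaHalfShift_add_one han,
      digammaHalfShift_eq_add_digammaHalfShift_add_one (by linarith : 0 < b + n)] at ih
    push_cast [← add_assoc]
    linarith

lemma antitoneOn_digammaHalfShift : AntitoneOn D (Ioi 0) := by
  intro a (ha : 0 < a) b (hb : 0 < b) hab
  have hbound : ∀ n : ℕ, D b - D a ≤ (b + n)⁻¹ := fun n => by
    have := digammaHalfShift_sub_add_nat_le ha hab n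
    have := digammaHalfShift_nonneg (by positivity : 0 < a + n)
    have := digammaHalfShift_le_inv (by positivity : 0 < b + n)
    linarith
  have hlim : Tendsto (fun n : ℕ => (b + n)⁻¹) atTop (𝓝 0) :=
    tendsto_inv_atTop_zero.comp (tendsto_atTop_add_const_left _ b tendsto_natCast_atTop_atTop)
  linarith [ge_of_tendsto' hlim hbound]

lemma strictAntiOn_digammaHalfShift : StrictAntiOn D (Ioi 0) := by
  intro a (ha : 0 < a) b (hb : 0 < b) hab
  have hf := strictAntiOn_inv_sub_inv_add_half ha hb hab
  have hD := antitoneOn_digammaHalfShift (by positivity : (0 : ℝ) < a + 1)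
    (by positivity : (0 : ℝ) < b + 1) (by linarith)
  rw [digammaHalfShift_eq_add_digammaHalfShift_add_one ha,
    digammaHalfShift_eq_add_digammaHalfShift_add_one hb]
  simp only at hf
  linarith

lemma inv_two_mul_le_digammaHalfShift {x : ℝ} (hx : 0 < x) : (2 * x)⁻¹ ≤ D x := by
  have := antitoneOn_digammaHalfShift hx (by positivity : (0 : ℝ) < x + 1 / 2) (by linarith)
  have := digammaHalfShift_add_digammaHalfShift_add_half hx
  rw [mul_inv]
  linarith

lemma exists_digamma_two_mul_sub_digamma_eq {M : ℝ} (hM : log 2 < M) :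
    ∃ x, 0 < x ∧ digamma (2 * x) - digamma x = M := by
  set ε := M - log 2
  have hε : 0 < ε := sub_pos.2 hM
  have hab : (8 * ε)⁻¹ ≤ ε⁻¹ := by gcongr; linarith
  have hlow : M < digamma (2 * (8 * ε)⁻¹) - digamma (8 * ε)⁻¹ := by
    have := inv_two_mul_le_digammaHalfShift (by positivity : 0 < (8 * ε)⁻¹)
    rw [digamma_two_mul_sub_digamma (by positivity)]
    field_simp at this ⊢
    linarith
  have hupp : digamma (2 * ε⁻¹) - digamma ε⁻¹ < M := by
    have := digammaHalfShift_le_inv (by positivity : 0 < ε⁻¹)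
    rw [digamma_two_mul_sub_digamma (by positivity)]
    rw [inv_inv] at this
    linarith
  obtain ⟨x, hx, hxM⟩ := exists_hasDerivWithinAt_eq_of_lt_of_gt hab
    (fun x hx => (hasDerivAt_half_log_Gamma_two_mul_sub_log_Gamma
      ((by positivity : (0 : ℝ) < (8 * ε)⁻¹).trans_le hx.1)).hasDerivWithinAt) hlow hupp
  exact ⟨x, (by positivity : (0 : ℝ) < (8 * ε)⁻¹).trans hx.1, hxM⟩

lemma log_two_lt_digamma_two_mul_sub_digamma {x : ℝ} (hx : 0 < x) :
    log 2 < digamma (2 * x) - digamma x := by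
  have := (inv_pos.2 (by positivity : 0 < 2 * x)).trans_le (inv_two_mul_le_digammaHalfShift hx)
  rw [digamma_two_mul_sub_digamma hx]
  linarith

lemma strictAntiOn_digamma_two_mul_sub_digamma :
    StrictAntiOn (fun x => digamma (2 * x) - digamma x) (Ioi 0) := by
  intro a (ha : 0 < a) b (hb : 0 < b) hab
  simp only [digamma_two_mul_sub_digamma ha, digamma_two_mul_sub_digamma hb]
  linarith [strictAntiOn_digammaHalfShift ha hb hab]

theorem digamma_two_x_sub_range :
    (fun x => digamma (2 * x) - digamma x) '' Set.Ioi (0:ℝ) = Set.Ioi (Real.log 2) ∧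
    (∀ x : ℝ, 0 < x → Real.log 2 < digamma (2 * x) - digamma x) ∧
    (∀ M : ℝ, Real.log 2 < M →
      ∃! x : ℝ, 0 < x ∧ digamma (2 * x) - digamma x = M) := by
  refine ⟨?_, fun _ => log_two_lt_digamma_two_mul_sub_digamma, fun M hM => ?_⟩
  · exact Subset.antisymm (image_subset_iff.2 fun _ => log_two_lt_digamma_two_mul_sub_digamma)
      fun _ => exists_digamma_two_mul_sub_digamma_eq
  · obtain ⟨x, hx, hxM⟩ := exists_digamma_two_mul_sub_digamma_eq hM
    exact ⟨x, ⟨hx, hxM⟩, fun y ⟨hy, hyM⟩ =>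
      strictAntiOn_digamma_two_mul_sub_digamma.injOn hy hx (hyM.trans hxM.symm)⟩
end

section
/- With $g_i, h_j$ as in the fixed-point map of the beta graph ML iteration, the map $f = (g,h)$ is monotone: if $a_i \ge x_i > 0$ and $b_j \ge y_j > 0$ for all $i, j$, then $g_i(a,b) \ge g_i(x,y)$ and $h_j(a,b) \ge h_j(x,y)$ for all $i, j$. -/
open Finset

/-- The inverse of the digamma function on `(0,∞)`. -/
noncomputable def digammaInv (y : ℝ) : ℝ := Function.invFunOn digamma (Set.Ioi 0) y

/-!
`ψ` is the derivative of the convex function `log Γ` on `(0,∞)`, hence monotone there. The slope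
of `log Γ` over `[x, x + 1]` is `log x`, so convexity gives `ψ x ≤ log x ≤ ψ (x + 1)`; thus `ψ`
is unbounded in both directions and, being a derivative, takes every real value (Darboux).
Therefore `ψ⁻¹` is monotone, and each `g i`, `h j` is `ψ⁻¹` of a nonnegative combination of
values of `ψ` at sums `a i + b j` that grow with `a` and `b`.
-/

theorem MonotoneOn.monotone_invFunOn {α β : Type*} [LinearOrder α] [Nonempty α] [LinearOrder β]
    {f : α → β} {s : Set α} (hf : MonotoneOn f s) (hsurj : Set.SurjOn f s Set.univ) :
    Monotone (Function.invFunOn f s) := by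
  intro v w hvw
  have hv : ∃ u ∈ s, f u = v := hsurj (Set.mem_univ v)
  have hw : ∃ u ∈ s, f u = w := hsurj (Set.mem_univ w)
  by_contra! hlt
  have hwv : w ≤ v := by
    simpa only [Function.invFunOn_eq hv, Function.invFunOn_eq hw] using
      hf (Function.invFunOn_mem hw) (Function.invFunOn_mem hv) hlt.le
  exact hlt.ne (by rw [le_antisymm hvw hwv])

lemma differentiableAt_log_Gamma {x : ℝ} (hx : 0 < x) :
    DifferentiableAt ℝ (fun y => Real.log (Real.Gamma y)) x :=
  (Real.differentiableAt_Gamma fun m => by linarith [(m.cast_nonneg : (0 : ℝ) ≤ m)]).log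
    (Real.Gamma_pos_of_pos hx).ne'

lemma digamma_monotoneOn : MonotoneOn digamma (Set.Ioi 0) :=
  Real.convexOn_log_Gamma.monotoneOn_deriv fun _ hx => differentiableAt_log_Gamma hx

lemma slope_log_Gamma {x : ℝ} (hx : 0 < x) :
    slope (Real.log ∘ Real.Gamma) x (x + 1) = Real.log x := by
  rw [slope_def_field, Function.comp_apply, Function.comp_apply, Real.Gamma_add_one hx.ne',
    Real.log_mul hx.ne' (Real.Gamma_pos_of_pos hx).ne']
  ring

lemma digamma_le_log {x : ℝ} (hx : 0 < x) : digamma x ≤ Real.log x := by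
  rw [← slope_log_Gamma hx]
  exact Real.convexOn_log_Gamma.deriv_le_slope hx (by simp only [Set.mem_Ioi]; linarith)
    (lt_add_one x) (differentiableAt_log_Gamma hx)

lemma log_le_digamma_add_one {x : ℝ} (hx : 0 < x) : Real.log x ≤ digamma (x + 1) := by
  rw [← slope_log_Gamma hx]
  exact Real.convexOn_log_Gamma.slope_le_deriv hx (by simp only [Set.mem_Ioi]; linarith)
    (lt_add_one x) (differentiableAt_log_Gamma (by linarith))

lemma digamma_surjOn : Set.SurjOn digamma (Set.Ioi 0) Set.univ := by
  intro v _
  have hImage : (digamma '' Set.Ioi 0).OrdConnected :=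
    Set.ordConnected_Ioi.image_deriv fun _ hx => differentiableAt_log_Gamma hx
  have hp : (0 : ℝ) < Real.exp v := Real.exp_pos v
  have hlow : digamma (Real.exp v) ≤ v := (Real.log_exp v).le.trans' (digamma_le_log hp)
  have hhigh : v ≤ digamma (Real.exp v + 1) :=
    (Real.log_exp v).ge.trans (log_le_digamma_add_one hp)
  exact hImage.out (Set.mem_image_of_mem _ hp)
    (Set.mem_image_of_mem _ (show (0 : ℝ) < Real.exp v + 1 by linarith)) ⟨hlow, hhigh⟩

lemma digammaInv_monotone : Monotone digammaInv :=
  digamma_monotoneOn.monotone_invFunOn digamma_surjOn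

lemma digamma_add_le_digamma_add {x y a b : ℝ} (hx : 0 < x) (hy : 0 < y) (hxa : x ≤ a)
    (hyb : y ≤ b) : digamma (x + y) ≤ digamma (a + b) :=
  digamma_monotoneOn (show 0 < x + y by linarith) (show 0 < a + b by linarith)
    (add_le_add hxa hyb)

lemma digammaInv_add_mul_sum_le {ι : Type*} (s : Finset ι) (r : ℝ) {c : ℝ} (hc : 0 ≤ c)
    {u v : ι → ℝ} (huv : ∀ k ∈ s, u k ≤ v k) :
    digammaInv (r + c * ∑ k ∈ s, u k) ≤ digammaInv (r + c * ∑ k ∈ s, v k) :=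
  digammaInv_monotone (add_le_add_right (mul_le_mul_of_nonneg_left (sum_le_sum huv) hc) r)

theorem fixed_point_map_monotone (n : ℕ) (hn : 2 ≤ n) (R C : Fin n → ℝ)
    (g h : (Fin n → ℝ) → (Fin n → ℝ) → Fin n → ℝ)
    (hg : ∀ a b i, g a b i =
      digammaInv (R i / (n - 1) + (1 / (n - 1)) * ∑ j ∈ univ \ {i}, digamma (a i + b j)))
    (hh : ∀ a b j, h a b j =
      digammaInv (C j / (n - 1) + (1 / (n - 1)) * ∑ i ∈ univ \ {j}, digamma (a i + b j)))
    (a b x y : Fin n → ℝ)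
    (hx : ∀ i, 0 < x i) (hy : ∀ j, 0 < y j)
    (hax : ∀ i, x i ≤ a i) (hby : ∀ j, y j ≤ b j) :
    (∀ i, g x y i ≤ g a b i) ∧ (∀ j, h x y j ≤ h a b j) := by
  have hweight : (0 : ℝ) ≤ 1 / (n - 1) :=
    one_div_nonneg.mpr (sub_nonneg.mpr (by exact_mod_cast (by omega : 1 ≤ n)))
  have hpair : ∀ i j, digamma (x i + y j) ≤ digamma (a i + b j) := fun i j =>
    digamma_add_le_digamma_add (hx i) (hy j) (hax i) (hby j)
  refine ⟨fun i => ?_, fun j => ?_⟩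
  · rw [hg, hg]
    exact digammaInv_add_mul_sum_le _ _ hweight fun j _ => hpair i j
  · rw [hh, hh]
    exact digammaInv_add_mul_sum_le _ _ hweight fun i _ => hpair i j
end
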